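/- arXiv:1109.2967 — 3 statements merged into one kernel-verified Lean document; each statement's English description precedes it below -/
import Mathlib

section
/- For every integer m and every measurable function f : ℂ² → ℂ, one has the identity in [0,∞]: ∫_H |w₂|^{2m} |f(w₁/w₂, w₂)|² dV(w) = ∫_P |z₂|^{2(m+1)} |f(z₁,z₂)|² dV(z). In particular, the pullback f ↦ f∘F under F(w₁,w₂) = (w₁/w₂,w₂) is an isometry from the weighted space L²(P,(m+1)Φ) onto L²(H,mΦ). -/
/-!
The map `(z₁, z₂) ↦ (z₂ z₁, z₂)` is inverse to `F(w₁, w₂) = (w₁ / w₂, w₂)` and carries `P` onto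
the Hartogs triangle. On each slice `z₂ = c ≠ 0` it is multiplication by `c` in the first
variable, whose real Jacobian is `|c|²`; by Fubini this produces the extra weight `|z₂|²`,
the slice `z₂ = 0` being null.
-/

open MeasureTheory Complex

noncomputable section

/-- The Hartogs triangle. -/
def Hartogs : Set (ℂ × ℂ) := {w | ‖w.1‖ < ‖w.2‖ ∧ ‖w.2‖ < 1}

/-- The product domain `P = D × D*`, the product of the unit disc and the punctured unit disc. -/
def Pdom : Set (ℂ × ℂ) :=
  {z | ‖z.1‖ < 1 ∧ (0 < ‖z.2‖ ∧ ‖z.2‖ < 1)}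

open scoped ENNReal

theorem Complex.map_mul_left_volume {c : ℂ} (hc : c ≠ 0) :
    Measure.map (c * ·) volume = ENNReal.ofReal (‖c‖ ^ 2)⁻¹ • (volume : Measure ℂ) := by
  have hdet : LinearMap.det (Algebra.lmul ℝ ℂ c) = ‖c‖ ^ 2 := by
    rw [← Algebra.norm_apply, Algebra.norm_complex_apply, normSq_eq_norm_sq]
  have := Measure.map_linearMap_addHaar_eq_smul_addHaar (volume : Measure ℂ)
    (f := Algebra.lmul ℝ ℂ c) (by rw [hdet]; positivity)
  rwa [hdet, abs_of_nonneg (by positivity)] at this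

theorem Complex.lintegral_comp_mul_left (g : ℂ → ℝ≥0∞) {c : ℂ} (hc : c ≠ 0) :
    ∫⁻ x, g (c * x) = ENNReal.ofReal (‖c‖ ^ 2)⁻¹ * ∫⁻ x, g x := by
  rw [← smul_eq_mul, ← lintegral_smul_measure, ← map_mul_left_volume hc,
    ← MeasurableEquiv.coe_mulLeft₀ hc, lintegral_map_equiv]
  rfl

theorem lintegral_norm_snd_sq_mul_comp_scale_fst {G : ℂ × ℂ → ℝ≥0∞} (hG : Measurable G) :
    ∫⁻ z : ℂ × ℂ, ENNReal.ofReal (‖z.2‖ ^ 2) * G (z.2 * z.1, z.2) = ∫⁻ w, G w := by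
  rw [Measure.volume_eq_prod ℂ ℂ, lintegral_prod_symm' _ (by fun_prop),
    lintegral_prod_symm' _ hG]
  refine lintegral_congr_ae ((volume : Measure ℂ).ae_ne 0 |>.mono fun c hc => ?_)
  dsimp only
  rw [lintegral_const_mul' _ _ ENNReal.ofReal_ne_top,
    lintegral_comp_mul_left (fun x => G (x, c)) hc, ← mul_assoc,
    ← ENNReal.ofReal_mul (by positivity), mul_inv_cancel₀ (by positivity), ENNReal.ofReal_one,
    one_mul]

theorem mk_mul_mem_hartogs_iff {x c : ℂ} : (c * x, c) ∈ Hartogs ↔ (x, c) ∈ Pdom := by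
  simp only [Hartogs, Pdom, Set.mem_ofPred_eq, norm_mul]
  constructor
  · rintro ⟨hlt, hc⟩
    have hpos : 0 < ‖c‖ := (mul_nonneg (norm_nonneg c) (norm_nonneg x)).trans_lt hlt
    exact ⟨(mul_lt_iff_lt_one_right hpos).1 hlt, hpos, hc⟩
  · rintro ⟨hx, hpos, hc⟩
    exact ⟨(mul_lt_iff_lt_one_right hpos).2 hx, hc⟩

theorem isOpen_hartogs : IsOpen Hartogs :=
  (isOpen_lt continuous_fst.norm continuous_snd.norm).inter
    (isOpen_lt continuous_snd.norm continuous_const)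

theorem isOpen_pdom : IsOpen Pdom :=
  (isOpen_lt continuous_fst.norm continuous_const).inter
    ((isOpen_lt continuous_const continuous_snd.norm).inter
      (isOpen_lt continuous_snd.norm continuous_const))

theorem pullback_isometry_weighted_L2 (m : ℤ) (f : ℂ × ℂ → ℂ) (hf : Measurable f) :
    (∫⁻ w in Hartogs,
        ENNReal.ofReal (‖w.2‖ ^ (2 * m) * ‖f (w.1 / w.2, w.2)‖ ^ 2))
      = ∫⁻ z in Pdom,
          ENNReal.ofReal (‖z.2‖ ^ (2 * (m + 1)) * ‖f z‖ ^ 2) := by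
  have hH := isOpen_hartogs.measurableSet
  rw [← lintegral_indicator hH, ← lintegral_indicator isOpen_pdom.measurableSet,
    ← lintegral_norm_snd_sq_mul_comp_scale_fst ((by fun_prop : Measurable _).indicator hH)]
  refine lintegral_congr fun z => ?_
  by_cases hz : z ∈ Pdom
  · have hz2 : z.2 ≠ 0 := norm_pos_iff.1 hz.2.1
    rw [Set.indicator_of_mem (mk_mul_mem_hartogs_iff.2 hz), Set.indicator_of_mem hz,
      mul_div_cancel_left₀ _ hz2, ← ENNReal.ofReal_mul (by positivity), ← mul_assoc,
      mul_add_one, zpow_add₀ (norm_ne_zero_iff.2 hz2), zpow_ofNat, mul_comm (‖z.2‖ ^ 2)]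
  · rw [Set.indicator_of_notMem (mk_mul_mem_hartogs_iff.not.2 hz), Set.indicator_of_notMem hz,
      mul_zero]
end
end

section
/- Let ℓ be an integer. If h is holomorphic on D* and ∫_{D*} |z|^{2ℓ} |h(z)|² dV(z) < ∞, then there exists f holomorphic on the unit disc D with ∫_D |f(z)|² dV(z) < ∞ such that h(z) = z^{−ℓ} f(z) for all z ∈ D*; that is, every element of the weighted Bergman space of the punctured disc with weight |z|^{2ℓ} is z^{−ℓ} times a square-integrable holomorphic function on the full disc. -/
open MeasureTheory Complex

noncomputable section

/-- The punctured open unit disc. -/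
def Dstar : Set ℂ := {z | 0 < ‖z‖ ∧ ‖z‖ < 1}

/-!
Put `g z = z ^ ℓ * h z`, a holomorphic function on the punctured disc with `∫ |g|² < ∞`.
Since `g²` is holomorphic, `|g|²` satisfies the sub-mean value inequality on discs; on the disc of
radius `|z| / 2` about `z` it gives `π |z|² |g z|² / 4 ≤ ∫ |g|²` over that disc, and the right-hand
side tends to `0` with `z` by absolute continuity of the integral. Hence `g z = o(1 / z)`, so `0`
is a removable singularity of `g`, and `f` is the holomorphic extension of `g` to the disc.
-/

open Metric Set Filter Topology
open scoped Real ENNReal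

theorem circleMap_eq_add_polarCoord_symm (c : ℂ) (p : ℝ × ℝ) :
    circleMap c p.1 p.2 = c + Complex.polarCoord.symm p := by
  rw [Complex.polarCoord_symm_apply, circleMap, Complex.exp_mul_I]
  push_cast
  ring

theorem setLIntegral_ball_eq_setLIntegral_circleMap (F : ℂ → ℝ≥0∞) (c : ℂ) (R : ℝ) :
    ∫⁻ z in ball c R, F z =
      ∫⁻ p in Ioo 0 R ×ˢ Ioo (-π) π, ENNReal.ofReal p.1 * F (circleMap c p.1 p.2) := by
  have hS : MeasurableSet (Ioo (0 : ℝ) R ×ˢ Ioo (-π) π) := measurableSet_Ioo.prod measurableSet_Ioo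
  have hpolar : ∀ p ∈ polarCoord.target,
      ENNReal.ofReal p.1 • (ball c R).indicator F (c + Complex.polarCoord.symm p) =
        (Ioo 0 R ×ˢ Ioo (-π) π).indicator
          (fun p : ℝ × ℝ => ENNReal.ofReal p.1 * F (circleMap c p.1 p.2)) p := by
    rintro ⟨r, θ⟩ ⟨hr, hθ⟩
    rw [← circleMap_eq_add_polarCoord_symm]
    have hmem : circleMap c r θ ∈ ball c R ↔ (r, θ) ∈ Ioo 0 R ×ˢ Ioo (-π) π := by
      simp [mem_ball, dist_eq_norm, circleMap_sub_center, abs_of_pos (mem_Ioi.1 hr), hr.out, hθ]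
    by_cases h : (r, θ) ∈ Ioo 0 R ×ˢ Ioo (-π) π
    · simp [indicator_of_mem h, indicator_of_mem (hmem.2 h)]
    · simp [indicator_of_notMem h, indicator_of_notMem (mt hmem.1 h)]
  rw [← lintegral_indicator measurableSet_ball, ← lintegral_add_left_eq_self _ c,
    ← Complex.lintegral_comp_polarCoord_symm, setLIntegral_congr_fun
      polarCoord.open_target.measurableSet hpolar, lintegral_indicator hS,
    Measure.restrict_restrict hS, inter_eq_left.2]
  exact prod_mono Ioo_subset_Ioi_self subset_rfl

theorem setLIntegral_Ioo_zero_ofReal {R : ℝ} (hR : 0 ≤ R) :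
    ∫⁻ r in Ioo 0 R, ENNReal.ofReal r = ENNReal.ofReal (R ^ 2 / 2) := by
  have hint : IntegrableOn (fun r : ℝ => r) (Ioo 0 R) :=
    (continuous_id.integrableOn_Icc (a := 0) (b := R)).mono_set Ioo_subset_Icc_self
  rw [← ofReal_integral_eq_lintegral_ofReal hint
      ((ae_restrict_iff' measurableSet_Ioo).2 (ae_of_all _ fun r hr => hr.1.le)),
    ← integral_Ioc_eq_integral_Ioo, ← intervalIntegral.integral_of_le hR, integral_id]
  ring_nf

section

variable {E : Type*} [NormedAddCommGroup E] [NormedSpace ℂ E] [CompleteSpace E]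

theorem DiffContOnCl.enorm_mul_two_pi_le_setLIntegral_circleMap {f : ℂ → E} {c : ℂ} {r : ℝ}
    (hf : DiffContOnCl ℂ f (ball c |r|)) :
    ‖f c‖ₑ * ENNReal.ofReal (2 * π) ≤ ∫⁻ θ in Ioo (-π) π, ‖f (circleMap c r θ)‖ₑ := by
  have hmean : (2 * π : ℝ) • f c = ∫ θ in (-π)..π, f (circleMap c r θ) := by
    rw [← hf.circleAverage, Real.circleAverage_eq_integral_add (-π),
      smul_inv_smul₀ Real.two_pi_pos.ne',
      intervalIntegral.integral_comp_add_right (fun θ => f (circleMap c r θ)), zero_add,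
      show 2 * π + -π = π by ring]
  calc ‖f c‖ₑ * ENNReal.ofReal (2 * π) = ‖(2 * π : ℝ) • f c‖ₑ := by
        rw [enorm_smul, Real.enorm_of_nonneg Real.two_pi_pos.le, mul_comm]
    _ ≤ ∫⁻ θ in Ioo (-π) π, ‖f (circleMap c r θ)‖ₑ := by
        rw [hmean, intervalIntegral.integral_of_le (by linarith [Real.pi_pos]),
          integral_Ioc_eq_integral_Ioo]
        exact enorm_integral_le_lintegral_enorm _

theorem DifferentiableOn.enorm_mul_volume_ball_le_setLIntegral {f : ℂ → E} {c : ℂ} {R : ℝ}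
    (hf : DifferentiableOn ℂ f (ball c R)) :
    ‖f c‖ₑ * volume (ball c R) ≤ ∫⁻ z in ball c R, ‖f z‖ₑ := by
  rcases le_or_gt R 0 with hR | hR
  · simp [ball_eq_empty.2 hR]
  have hS : MeasurableSet (Ioo (0 : ℝ) R ×ˢ Ioo (-π) π) := measurableSet_Ioo.prod measurableSet_Ioo
  have hcircle : ∀ r ∈ Ioo 0 R, ENNReal.ofReal r * (‖f c‖ₑ * ENNReal.ofReal (2 * π)) ≤
      ∫⁻ θ in Ioo (-π) π, ENNReal.ofReal r * ‖f (circleMap c r θ)‖ₑ := by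
    intro r hr
    rw [lintegral_const_mul' _ _ ENNReal.ofReal_ne_top]
    gcongr
    refine DiffContOnCl.enorm_mul_two_pi_le_setLIntegral_circleMap ?_
    rw [abs_of_pos hr.1]
    exact (hf.mono (closedBall_subset_ball hr.2)).diffContOnCl_ball subset_rfl
  have hmeas : AEMeasurable (fun p : ℝ × ℝ => ENNReal.ofReal p.1 * ‖f (circleMap c p.1 p.2)‖ₑ)
      ((volume.restrict (Ioo 0 R)).prod (volume.restrict (Ioo (-π) π))) := by
    rw [Measure.prod_restrict, ← Measure.volume_eq_prod]
    refine (ENNReal.measurable_ofReal.comp measurable_fst).aemeasurable.mul ?_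
    refine ContinuousOn.aemeasurable (ContinuousOn.enorm ?_) hS
    refine hf.continuousOn.comp (by fun_prop) fun p hp => ?_
    simp [mem_ball, dist_eq_norm, circleMap_sub_center, abs_of_pos hp.1.1, hp.1.2]
  calc ‖f c‖ₑ * volume (ball c R)
      = ∫⁻ r in Ioo 0 R, ENNReal.ofReal r * (‖f c‖ₑ * ENNReal.ofReal (2 * π)) := by
        rw [lintegral_mul_const _ ENNReal.measurable_ofReal, setLIntegral_Ioo_zero_ofReal hR.le,
          Complex.volume_ball, ← ENNReal.ofReal_pow hR.le, ← ENNReal.ofReal_coe_nnreal,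
          NNReal.coe_real_pi, ← ENNReal.ofReal_mul (by positivity), mul_left_comm _ ‖f c‖ₑ,
          ← ENNReal.ofReal_mul (by positivity)]
        congr 2
        ring
    _ ≤ ∫⁻ r in Ioo 0 R, ∫⁻ θ in Ioo (-π) π, ENNReal.ofReal r * ‖f (circleMap c r θ)‖ₑ :=
        setLIntegral_mono' measurableSet_Ioo hcircle
    _ = ∫⁻ p in Ioo 0 R ×ˢ Ioo (-π) π, ENNReal.ofReal p.1 * ‖f (circleMap c p.1 p.2)‖ₑ := by
        rw [Measure.volume_eq_prod, ← Measure.prod_restrict, lintegral_prod _ hmeas]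
    _ = ∫⁻ z in ball c R, ‖f z‖ₑ :=
        (setLIntegral_ball_eq_setLIntegral_circleMap (fun z => ‖f z‖ₑ) c R).symm

end

theorem DifferentiableOn.enorm_pow_mul_volume_ball_le_setLIntegral {g : ℂ → ℂ} {c : ℂ} {R : ℝ}
    (hg : DifferentiableOn ℂ g (ball c R)) (n : ℕ) :
    ‖g c‖ₑ ^ n * volume (ball c R) ≤ ∫⁻ z in ball c R, ‖g z‖ₑ ^ n := by
  simpa only [Pi.pow_apply, enorm_pow] using (hg.pow n).enorm_mul_volume_ball_le_setLIntegral

theorem Metric.ball_half_dist_subset {X : Type*} [MetricSpace X] (z c : X) :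
    ball z (dist z c / 2) ⊆ ball c (2 * dist z c) \ {c} := by
  intro w hw
  rw [mem_ball] at hw
  refine ⟨?_, fun hwc => ?_⟩
  · rw [mem_ball]
    linarith [dist_triangle w z c, dist_nonneg (x := w) (y := z)]
  · rw [mem_singleton_iff.1 hwc, dist_comm] at hw
    linarith [dist_nonneg (x := z) (y := c)]

theorem tendsto_volume_ball_half_dist (c : ℂ) :
    Tendsto (fun z => volume (ball z (dist z c / 2))) (𝓝 c) (𝓝 0) := by
  simp_rw [Complex.volume_ball]
  have hcont : Continuous fun z : ℂ => ENNReal.ofReal (dist z c / 2) ^ 2 * NNReal.pi :=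
    (ENNReal.continuous_mul_const ENNReal.coe_ne_top).comp
      (ENNReal.continuous_pow 2 |>.comp (ENNReal.continuous_ofReal.comp (by fun_prop)))
  simpa using hcont.tendsto c

theorem norm_mul_lt_of_enorm_sq_mul_volume_ball_lt {F : Type*} [SeminormedAddCommGroup F]
    {x : F} {z w : ℂ} {ρ σ : ℝ} (h : ‖x‖ₑ ^ 2 * volume (ball z ρ) < volume (ball w σ)) :
    ‖x‖ * ρ < σ := by
  contrapose! h
  rw [Complex.volume_ball, Complex.volume_ball, ← mul_assoc, ← mul_pow, ← ofReal_norm,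
    ← ENNReal.ofReal_mul (norm_nonneg _)]
  gcongr

theorem isLittleO_sub_inv_of_setLIntegral_enorm_sq_ne_top {g : ℂ → ℂ} {U : Set ℂ} {c : ℂ}
    (hU : U ∈ 𝓝[≠] c) (hg : DifferentiableOn ℂ g U) (hL2 : ∫⁻ z in U, ‖g z‖ₑ ^ 2 ≠ ∞) :
    g =o[𝓝[≠] c] fun z => (z - c)⁻¹ := by
  rw [Asymptotics.isLittleO_iff]
  intro ε hε
  obtain ⟨η, hη, hsmall⟩ := exists_pos_setLIntegral_lt_of_measure_lt hL2
    (measure_ball_pos volume (0 : ℂ) (half_pos hε)).ne'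
  obtain ⟨r, hr, hrU⟩ := Metric.mem_nhdsWithin_iff.1 hU
  filter_upwards [nhdsWithin_le_nhds ((tendsto_volume_ball_half_dist c).eventually_lt_const hη),
    nhdsWithin_le_nhds (ball_mem_nhds c (half_pos hr)), self_mem_nhdsWithin] with z hzvol hzr hzc
  have hsub : ball z (dist z c / 2) ⊆ U := fun w hw => by
    obtain ⟨hwr, hwc⟩ := ball_half_dist_subset z c hw
    exact hrU ⟨ball_subset_ball (by linarith [mem_ball.1 hzr]) hwr, hwc⟩
  have hmean : ‖g z‖ₑ ^ 2 * volume (ball z (dist z c / 2)) < volume (ball (0 : ℂ) (ε / 2)) :=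
    calc ‖g z‖ₑ ^ 2 * volume (ball z (dist z c / 2))
        ≤ ∫⁻ w in ball z (dist z c / 2), ‖g w‖ₑ ^ 2 :=
          (hg.mono hsub).enorm_pow_mul_volume_ball_le_setLIntegral 2
      _ = ∫⁻ w in ball z (dist z c / 2), ‖g w‖ₑ ^ 2 ∂volume.restrict U := by
          rw [Measure.restrict_restrict measurableSet_ball, inter_eq_left.2 hsub]
      _ < _ := hsmall _ ((Measure.restrict_apply_le _ _).trans_lt hzvol)
  have hprod : ‖g z‖ * (dist z c / 2) < ε / 2 := norm_mul_lt_of_enorm_sq_mul_volume_ball_lt hmean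
  rw [norm_inv, ← dist_eq_norm, le_mul_inv_iff₀ (dist_pos.2 hzc)]
  linarith

theorem differentiableOn_update_limUnder_insert_of_setLIntegral_enorm_sq_ne_top {g : ℂ → ℂ}
    {U : Set ℂ} {c : ℂ} (hU : U ∈ 𝓝[≠] c) (hg : DifferentiableOn ℂ g U)
    (hL2 : ∫⁻ z in U, ‖g z‖ₑ ^ 2 ≠ ∞) :
    DifferentiableOn ℂ (Function.update g c (limUnder (𝓝[≠] c) g)) (insert c U) :=
  Complex.differentiableOn_update_limUnder_insert_of_isLittleO hU hg <|
    (isLittleO_sub_inv_of_setLIntegral_enorm_sq_ne_top hU hg hL2).sub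
      isBoundedUnder_const.isLittleO_sub_self_inv

theorem Dstar_eq_ball_sdiff_zero : Dstar = ball 0 1 \ {0} := by
  ext z
  simp [Dstar, and_comm]

theorem ofReal_norm_zpow_mul_sq (ℓ : ℤ) (z w : ℂ) :
    ENNReal.ofReal (‖z‖ ^ (2 * ℓ) * ‖w‖ ^ 2) = ‖z ^ ℓ * w‖ₑ ^ 2 := by
  rw [← ofReal_norm, ← ENNReal.ofReal_pow (norm_nonneg _), norm_mul, norm_zpow, mul_pow,
    ← zpow_natCast (‖z‖ ^ ℓ), ← zpow_mul, mul_comm ℓ, Nat.cast_ofNat]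

theorem weighted_bergman_punctured_disc (ℓ : ℤ) (h : ℂ → ℂ)
    (hh : DifferentiableOn ℂ h Dstar)
    (hhL2 : (∫⁻ z in Dstar, ENNReal.ofReal (‖z‖ ^ (2 * ℓ) * ‖h z‖ ^ 2)) < ⊤) :
    ∃ f : ℂ → ℂ,
      DifferentiableOn ℂ f (Metric.ball (0 : ℂ) 1) ∧
      (∫⁻ z in Metric.ball (0 : ℂ) 1, ENNReal.ofReal (‖f z‖ ^ 2)) < ⊤ ∧
      ∀ z ∈ Dstar, h z = z ^ (-ℓ) * f z := by
  set g : ℂ → ℂ := fun z => z ^ ℓ * h z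
  have hne : ∀ z ∈ Dstar, z ≠ 0 := fun z hz => norm_pos_iff.1 hz.1
  have hU : Dstar ∈ 𝓝[≠] (0 : ℂ) :=
    Dstar_eq_ball_sdiff_zero ▸ sdiff_mem_nhdsWithin_compl (ball_mem_nhds 0 one_pos) _
  have hball : insert 0 Dstar = ball (0 : ℂ) 1 := by
    rw [Dstar_eq_ball_sdiff_zero, insert_sdiff_singleton, insert_eq_of_mem (mem_ball_self one_pos)]
  have hg : DifferentiableOn ℂ g Dstar := fun z hz =>
    ((differentiableAt_zpow.2 (Or.inl (hne z hz))).differentiableWithinAt).mul (hh z hz)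
  have hgL2 : ∫⁻ z in Dstar, ‖g z‖ₑ ^ 2 ≠ ∞ := by
    simpa only [ofReal_norm_zpow_mul_sq] using hhL2.ne
  set f := Function.update g 0 (limUnder (𝓝[≠] 0) g)
  have hfg : ∀ z ∈ Dstar, f z = g z := fun z hz => Function.update_of_ne (hne z hz) _ _
  refine ⟨f, hball ▸ differentiableOn_update_limUnder_insert_of_setLIntegral_enorm_sq_ne_top
    hU hg hgL2, ?_, fun z hz => ?_⟩
  · have hmeas : MeasurableSet Dstar :=
      Dstar_eq_ball_sdiff_zero ▸ measurableSet_ball.diff (measurableSet_singleton 0)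
    rw [← hball, setLIntegral_congr (insert_ae_eq_self 0 Dstar), lt_top_iff_ne_top]
    convert hgL2 using 1
    refine setLIntegral_congr_fun hmeas fun z hz => ?_
    rw [hfg z hz, ENNReal.ofReal_pow (norm_nonneg _), ofReal_norm]
  · rw [hfg z hz, zpow_neg, inv_mul_cancel_left₀ (zpow_ne_zero ℓ (hne z hz))]
end
end

section
/- For every integer k ≥ 0 and every integer ℓ there is a constant C > 0 such that for every g : ℂ → ℂ infinitely differentiable on D*, the function g̃(z) = z^{k+ℓ} g(z) on D* satisfies Σ_{j=0}^{k} ∫_{D*} ‖Dʲg̃(z)‖² dV(z) ≤ C · Σ_{j=0}^{k} ∫_{D*} |z|^{2ℓ} ‖Dʲg(z)‖² dV(z), as an inequality in [0,∞]; in particular, multiplication by z^{k+ℓ} maps the weighted Sobolev space W^k(D*, ℓφ) boundedly into the unweighted Sobolev space of order k. -/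
/-!
By the Leibniz rule, `Dʲ(z ^ m * g)` is a binomial combination of the products
`Dⁱ(z ^ m) · Dʲ⁻ⁱ g`, and `‖Dⁱ(z ^ m)‖ = |m (m - 1) ⋯ (m - i + 1)| |z| ^ (m - i)`. For `m = k + ℓ`
and `i ≤ j ≤ k` we have `m - i ≥ ℓ`, so `|z| ^ (m - i) ≤ |z| ^ ℓ` on the punctured disc. Hence
`‖Dʲ(z ^ m * g)‖` is bounded pointwise by a constant times `|z| ^ ℓ ∑_{i ≤ k} ‖Dⁱ g‖`;
squaring with Cauchy–Schwarz and integrating gives the weighted bound.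
-/

open MeasureTheory Complex

noncomputable section

open Finset

theorem isOpen_Dstar : IsOpen Dstar :=
  (isOpen_lt continuous_const continuous_norm).inter (isOpen_lt continuous_norm continuous_const)

theorem ne_zero_of_mem_Dstar {z : ℂ} (hz : z ∈ Dstar) : z ≠ 0 :=
  norm_pos_iff.mp hz.1

theorem contDiffAt_zpow_of_ne_zero {m : ℤ} {z : ℂ} (hz : z ≠ 0) {n : WithTop ℕ∞} :
    ContDiffAt ℂ n (fun w : ℂ => w ^ m) z :=
  ((differentiableOn_zpow m {0}ᶜ (Or.inl (by simp))).contDiffOn isOpen_compl_singleton).contDiffAt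
    (isOpen_compl_singleton.mem_nhds hz)

theorem norm_iteratedFDeriv_zpow (m : ℤ) (i : ℕ) {z : ℂ} (hz : z ≠ 0) :
    ‖iteratedFDeriv ℝ i (fun w : ℂ => w ^ m) z‖ =
      ‖∏ t ∈ range i, ((m : ℂ) - t)‖ * ‖z‖ ^ (m - i) := by
  rw [← (contDiffAt_zpow_of_ne_zero hz (n := i)).restrictScalars_iteratedFDeriv (𝕜 := ℝ)]
  simp only [Function.comp_apply, ContinuousMultilinearMap.norm_restrictScalars,
    norm_iteratedFDeriv_eq_norm_iteratedDeriv, iteratedDeriv_eq_iterate, iter_deriv_zpow,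
    norm_mul, norm_zpow]

theorem exists_norm_iteratedFDeriv_zpow_le (m : ℤ) (k : ℕ) :
    ∃ c : ℝ, 0 < c ∧ ∀ i ≤ k, ∀ z : ℂ, z ≠ 0 → ‖z‖ ≤ 1 →
      ‖iteratedFDeriv ℝ i (fun w : ℂ => w ^ m) z‖ ≤ c * ‖z‖ ^ (m - k) := by
  set A : ℕ → ℝ := fun i => ‖∏ t ∈ range i, ((m : ℂ) - t)‖
  have hA_le : ∀ i ≤ k, A i ≤ ∑ i ∈ range (k + 1), A i := fun i hi =>
    single_le_sum (f := A) (fun _ _ => norm_nonneg _) (mem_range.mpr (Nat.lt_succ_of_le hi))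
  refine ⟨∑ i ∈ range (k + 1), A i, ?_, fun i hi z hz hz1 => ?_⟩
  · exact one_pos.trans_le ((by simp [A] : (1 : ℝ) = A 0).trans_le (hA_le 0 k.zero_le))
  rw [norm_iteratedFDeriv_zpow m i hz]
  exact mul_le_mul (hA_le i hi)
    (zpow_le_zpow_right_of_le_one₀ (norm_pos_iff.mpr hz) hz1 (by omega))
    (zpow_nonneg (norm_nonneg z) _) ((norm_nonneg _).trans (hA_le i hi))

theorem norm_iteratedFDerivWithin_mul_le_of_forall_le {𝕜 E A : Type*} [NontriviallyNormedField 𝕜]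
    [NormedAddCommGroup E] [NormedSpace 𝕜 E] [NormedRing A] [NormedAlgebra 𝕜 A] {f g : E → A}
    {s : Set E} {N : WithTop ℕ∞} (hf : ContDiffOn 𝕜 N f s) (hg : ContDiffOn 𝕜 N g s)
    (hs : UniqueDiffOn 𝕜 s) {x : E} (hx : x ∈ s) {n : ℕ} (hn : n ≤ N) {a : ℝ}
    (hfa : ∀ i ≤ n, ‖iteratedFDerivWithin 𝕜 i f s x‖ ≤ a) :
    ‖iteratedFDerivWithin 𝕜 n (fun y => f y * g y) s x‖ ≤
      2 ^ n * a * ∑ i ∈ range (n + 1), ‖iteratedFDerivWithin 𝕜 i g s x‖ := by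
  have ha : 0 ≤ a := (norm_nonneg _).trans (hfa 0 n.zero_le)
  calc _ ≤ ∑ i ∈ range (n + 1), (n.choose i : ℝ) * ‖iteratedFDerivWithin 𝕜 i f s x‖ *
          ‖iteratedFDerivWithin 𝕜 (n - i) g s x‖ :=
        norm_iteratedFDerivWithin_mul_le hf hg hs hx hn
    _ ≤ ∑ i ∈ range (n + 1), 2 ^ n * a * ‖iteratedFDerivWithin 𝕜 (n - i) g s x‖ := by
        refine sum_le_sum fun i hi => ?_
        gcongr
        · exact_mod_cast n.choose_le_two_pow i
        · exact hfa i (Nat.lt_succ_iff.mp (mem_range.mp hi))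
    _ = _ := by
        rw [← mul_sum]
        exact congrArg _ (sum_range_reflect (fun i => ‖iteratedFDerivWithin 𝕜 i g s x‖) (n + 1))

theorem sum_lintegral_le_card_mul_sum_lintegral {α ι : Type*} [MeasurableSpace α]
    {μ : Measure α} (t : Finset ι) {F G : ι → α → ENNReal} {c : ENNReal}
    (hG : ∀ i ∈ t, AEMeasurable (G i) μ) (hFG : ∀ j ∈ t, ∀ᵐ x ∂μ, F j x ≤ c * ∑ i ∈ t, G i x) :
    ∑ j ∈ t, ∫⁻ x, F j x ∂μ ≤ #t * c * ∑ i ∈ t, ∫⁻ x, G i x ∂μ := by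
  calc ∑ j ∈ t, ∫⁻ x, F j x ∂μ ≤ ∑ _j ∈ t, c * ∑ i ∈ t, ∫⁻ x, G i x ∂μ := by
        refine sum_le_sum fun j hj => ?_
        rw [← lintegral_finsetSum' t hG, ← lintegral_const_mul'' c]
        · exact lintegral_mono_ae (hFG j hj)
        · exact t.aemeasurable_fun_sum hG
    _ = _ := by rw [sum_const, nsmul_eq_mul, mul_assoc]

theorem exists_sq_norm_iteratedFDerivWithin_zpow_mul_le (k : ℕ) (ℓ : ℤ) :
    ∃ C : ℝ, 0 < C ∧ ∀ g : ℂ → ℂ, ContDiffOn ℝ (⊤ : ℕ∞) g Dstar → ∀ j ≤ k, ∀ z ∈ Dstar,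
      ‖iteratedFDerivWithin ℝ j (fun z : ℂ => z ^ ((k : ℤ) + ℓ) * g z) Dstar z‖ ^ 2 ≤
        C * ∑ i ∈ range (k + 1), ‖z‖ ^ (2 * ℓ) * ‖iteratedFDerivWithin ℝ i g Dstar z‖ ^ 2 := by
  obtain ⟨c, hc, hzpow⟩ := exists_norm_iteratedFDeriv_zpow_le ((k : ℤ) + ℓ) k
  refine ⟨(k + 1) * (2 ^ k * c) ^ 2, by positivity, fun g hg j hj z hz => ?_⟩
  set w := ‖z‖ ^ ℓ
  set d : ℕ → ℝ := fun i => ‖iteratedFDerivWithin ℝ i g Dstar z‖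
  have hw_sq : w ^ 2 = ‖z‖ ^ (2 * ℓ) := by rw [mul_comm, zpow_mul]; norm_cast
  have hzpow_smooth : ContDiffOn ℝ (⊤ : ℕ∞) (fun z : ℂ => z ^ ((k : ℤ) + ℓ)) Dstar :=
    fun z hz =>
      ((contDiffAt_zpow_of_ne_zero (ne_zero_of_mem_Dstar hz)).restrict_scalars ℝ).contDiffWithinAt
  have hleibniz := norm_iteratedFDerivWithin_mul_le_of_forall_le hzpow_smooth hg
    isOpen_Dstar.uniqueDiffOn hz (n := j) (by exact_mod_cast le_top) (a := c * w) fun i hi => by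
      rw [iteratedFDerivWithin_of_isOpen i isOpen_Dstar hz]
      simpa using hzpow i (hi.trans hj) z (ne_zero_of_mem_Dstar hz) hz.2.le
  have hsum : ∑ i ∈ range (j + 1), d i ≤ ∑ i ∈ range (k + 1), d i :=
    sum_le_sum_of_subset_of_nonneg (range_subset_range.mpr (by omega)) fun _ _ _ => norm_nonneg _
  have hpow : (2 : ℝ) ^ j ≤ 2 ^ k := pow_le_pow_right₀ one_le_two hj
  calc _ ≤ (2 ^ j * (c * w) * ∑ i ∈ range (j + 1), d i) ^ 2 := by gcongr
    _ ≤ (2 ^ k * (c * w) * ∑ i ∈ range (k + 1), d i) ^ 2 := by gcongr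
    _ = (2 ^ k * c) ^ 2 * (∑ i ∈ range (k + 1), w * d i) ^ 2 := by rw [← mul_sum]; ring
    _ ≤ (2 ^ k * c) ^ 2 * ((k + 1) * ∑ i ∈ range (k + 1), (w * d i) ^ 2) := by
        gcongr
        simpa using sq_sum_le_card_mul_sum_sq (s := range (k + 1)) (f := fun i => w * d i)
    _ = _ := by simp only [mul_pow, hw_sq, d]; ring

theorem continuousOn_norm_zpow_mul_sq_norm_iteratedFDerivWithin (ℓ : ℤ) (i : ℕ) {g : ℂ → ℂ}
    (hg : ContDiffOn ℝ (⊤ : ℕ∞) g Dstar) :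
    ContinuousOn (fun z : ℂ => ‖z‖ ^ (2 * ℓ) * ‖iteratedFDerivWithin ℝ i g Dstar z‖ ^ 2) Dstar :=
  (continuous_norm.continuousOn.zpow₀ _ fun _ hz => Or.inl hz.1.ne').mul
    ((hg.continuousOn_iteratedFDerivWithin (by exact_mod_cast le_top)
      isOpen_Dstar.uniqueDiffOn).norm.pow 2)

theorem multiplication_weighted_sobolev_bound (k : ℕ) (ℓ : ℤ) :
    ∃ C : ℝ, 0 < C ∧
      ∀ g : ℂ → ℂ, ContDiffOn ℝ (⊤ : ℕ∞) g Dstar →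
        (∑ j ∈ Finset.range (k + 1),
            ∫⁻ z in Dstar,
              ENNReal.ofReal
                (‖iteratedFDerivWithin ℝ j
                    (fun z : ℂ => z ^ ((k : ℤ) + ℓ) * g z) Dstar z‖ ^ 2))
          ≤ ENNReal.ofReal C *
            (∑ j ∈ Finset.range (k + 1),
              ∫⁻ z in Dstar,
                ENNReal.ofReal (‖z‖ ^ (2 * ℓ) *
                  ‖iteratedFDerivWithin ℝ j g Dstar z‖ ^ 2)) := by
  obtain ⟨C, hC, hpointwise⟩ := exists_sq_norm_iteratedFDerivWithin_zpow_mul_le k ℓ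
  refine ⟨(k + 1) * C, by positivity, fun g hg => ?_⟩
  have hcard : ENNReal.ofReal ((k : ℝ) + 1) = #(range (k + 1)) := by
    rw [card_range]; exact_mod_cast ENNReal.ofReal_natCast (k + 1)
  rw [ENNReal.ofReal_mul (by positivity), hcard]
  refine sum_lintegral_le_card_mul_sum_lintegral _ (fun i _ => ?_) fun j hj => ?_
  · exact ENNReal.measurable_ofReal.comp_aemeasurable
      ((continuousOn_norm_zpow_mul_sq_norm_iteratedFDerivWithin ℓ i hg).aemeasurable
        isOpen_Dstar.measurableSet)
  · filter_upwards [ae_restrict_mem isOpen_Dstar.measurableSet] with z hz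
    rw [← ENNReal.ofReal_sum_of_nonneg (fun i _ => by positivity), ← ENNReal.ofReal_mul hC.le]
    exact ENNReal.ofReal_le_ofReal
      (hpointwise g hg j (Nat.lt_succ_iff.mp (mem_range.mp hj)) z hz)
end
end
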